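/- arXiv:2405.16924 — 4 statements merged into one kernel-verified Lean document; each statement's English description precedes it below -/
import Mathlib

section
/- Let p_X(x) = exp(-x - exp(-x)) and p_N(n) = exp(-n - exp(-n)) be Gumbel densities, f(x) = -x, p_Y(y) = exp(-y - 2*log(1+exp(-y))), p_{Ñ}(ñ) = exp(-2ñ - exp(-ñ)), and g(y) = log(1 + exp(-y)). Then for all real x, y: p_N(y - f(x)) * p_X(x) = p_{Ñ}(x - g(y)) * p_Y(y). -/
open Real

theorem gumbel_logistic_backward_identity
    (f : ℝ → ℝ) (hf : ∀ x, f x = -x)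
    (g : ℝ → ℝ) (hg : ∀ y, g y = Real.log (1 + Real.exp (-y)))
    (pX pN pY pNt : ℝ → ℝ)
    (hpX : ∀ x, pX x = Real.exp (-x - Real.exp (-x)))
    (hpN : ∀ n, pN n = Real.exp (-n - Real.exp (-n)))
    (hpY : ∀ y, pY y = Real.exp (-y - 2 * Real.log (1 + Real.exp (-y))))
    (hpNt : ∀ n, pNt n = Real.exp (-2 * n - Real.exp (-n))) :
    ∀ x y : ℝ, pN (y - f x) * pX x = pNt (x - g y) * pY y := by
  intro x y
  have hpos : (0:ℝ) < 1 + Real.exp (-y) := by positivity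
  have h1 : Real.exp (-(x - Real.log (1 + Real.exp (-y))))
      = Real.exp (-x) * (1 + Real.exp (-y)) := by
    rw [neg_sub, Real.exp_sub, Real.exp_log hpos, div_eq_mul_inv, ← Real.exp_neg, mul_comm]
  have h2 : Real.exp (-(y - -x)) = Real.exp (-y) * Real.exp (-x) := by
    rw [← Real.exp_add]; ring_nf
  simp only [hf, hg, hpX, hpN, hpY, hpNt]
  rw [← Real.exp_add, ← Real.exp_add]
  congr 1
  rw [h1, h2]
  ring
end

section
/- Let ν, ξ, η_b, ν_b : ℝ → ℝ be three times differentiable and h, g : ℝ → ℝ three times differentiable, and suppose ν(y - h(x)) + ξ(x) = ν_b(x - g(y)) + η_b(y) for all (x, y) in ℝ². Then at every point (x, y) with ν''(y - h(x))·h'(x) ≠ 0 and g'(y) ≠ 0, the following differential equation holds: ξ'''(x) = ξ''(x)·(h''/h' - ν'''·h'/ν'') + ν'''·ν'·h''·h'/ν'' - ν'·(h'')²/h' - 2ν''·h''·h' + ν'·h''', where ν and its derivatives are evaluated at y - h(x) and h and its derivatives at x. -/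
/-!
Write `π(x, y) = ν(y - h x) + ξ x` for the common log-density. The backward factorization gives
`∂²π/∂x² = ν_b''(x - g y)` and `∂²π/∂x∂y = -g'(y) ν_b''(x - g y)`, so for fixed `y` the two second
partials, as functions of `x`, differ by a constant factor and their Wronskian in `x` vanishes.
Written out through the forward factorization, and solved for `ξ'''` where
`∂²π/∂x∂y = -ν''(y - h x) h'(x)` is nonzero, this is the stated equation.
-/

section Calculus

variable {𝕜 : Type*} [NontriviallyNormedField 𝕜]

theorem ContDiff.differentiable_deriv_iterate {F : Type*} [NormedAddCommGroup F]
    [NormedSpace 𝕜 F] {f : 𝕜 → F} {n m : ℕ} (hf : ContDiff 𝕜 n f) (hm : m < n) :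
    Differentiable 𝕜 (deriv^[m] f) :=
  iteratedDeriv_eq_iterate (f := f) ▸ hf.differentiable_iteratedDeriv m (mod_cast hm)

theorem HasDerivAt.eq_of_forall_eq {F : Type*} [NormedAddCommGroup F] [NormedSpace 𝕜 F]
    {f g : 𝕜 → F} {f' g' : F} {x : 𝕜} (hf : HasDerivAt f f' x) (hg : HasDerivAt g g' x)
    (hfg : ∀ t, f t = g t) : f' = g' :=
  hf.unique (funext hfg ▸ hg)

theorem HasDerivAt.wronskian_eq_zero_of_eq_const_mul {F G : 𝕜 → 𝕜} {F' G' c x : 𝕜}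
    (hF : HasDerivAt F F' x) (hG : HasDerivAt G G' x) (hFG : ∀ t, F t = c * G t) :
    F' * G x - G' * F x = 0 := by
  have hF' : F' = c * G' := hF.eq_of_forall_eq (hG.const_mul c) hFG
  rw [hF', hFG]
  ring

theorem hasDerivAt_comp_const_sub_mul {φ u v : 𝕜 → 𝕜} {u' v' x : 𝕜} (c : 𝕜)
    (hφ : DifferentiableAt 𝕜 φ (c - u x)) (hu : HasDerivAt u u' x) (hv : HasDerivAt v v' x) :
    HasDerivAt (fun t => φ (c - u t) * v t)
      (deriv φ (c - u x) * -u' * v x + φ (c - u x) * v') x :=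
  (hφ.hasDerivAt.comp x (hu.const_sub c)).mul hv

end Calculus

section AdditiveNoise

variable {𝕜 : Type*} [NontriviallyNormedField 𝕜] {ν ξ ν_b η_b h g : 𝕜 → 𝕜}

theorem partialX_forward_eq_backward (hν : Differentiable 𝕜 ν) (hξ : Differentiable 𝕜 ξ)
    (hh : Differentiable 𝕜 h) (hνb : Differentiable 𝕜 ν_b)
    (heq : ∀ x y, ν (y - h x) + ξ x = ν_b (x - g y) + η_b y) (x y : 𝕜) :
    deriv ξ x - deriv ν (y - h x) * deriv h x = deriv ν_b (x - g y) := by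
  have hfwd : HasDerivAt (fun t => ν (y - h t) + ξ t)
      (deriv ν (y - h x) * -deriv h x + deriv ξ x) x :=
    ((hν _).hasDerivAt.comp x ((hh x).hasDerivAt.const_sub y)).add (hξ x).hasDerivAt
  have hbwd : HasDerivAt (fun t => ν_b (t - g y) + η_b y) (deriv ν_b (x - g y)) x :=
    ((hνb _).hasDerivAt.comp_sub_const x (g y)).add_const _
  linear_combination hfwd.eq_of_forall_eq hbwd (heq · y)

theorem partialXX_forward_eq_backward (hν' : Differentiable 𝕜 (deriv ν))
    (hξ' : Differentiable 𝕜 (deriv ξ)) (hh : Differentiable 𝕜 h) (hh' : Differentiable 𝕜 (deriv h))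
    (hνb' : Differentiable 𝕜 (deriv ν_b))
    (hdx : ∀ x y, deriv ξ x - deriv ν (y - h x) * deriv h x = deriv ν_b (x - g y)) (x y : 𝕜) :
    deriv (deriv ν) (y - h x) * deriv h x * deriv h x - deriv ν (y - h x) * deriv (deriv h) x
      + deriv (deriv ξ) x = deriv (deriv ν_b) (x - g y) := by
  have hfwd := (hξ' x).hasDerivAt.sub
    (hasDerivAt_comp_const_sub_mul y (hν' _) (hh x).hasDerivAt (hh' x).hasDerivAt)
  have hbwd : HasDerivAt (fun t => deriv ν_b (t - g y)) (deriv (deriv ν_b) (x - g y)) x :=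
    (hνb' _).hasDerivAt.comp_sub_const x (g y)
  linear_combination hfwd.eq_of_forall_eq hbwd (hdx · y)

theorem partialXY_forward_eq_backward (hν' : Differentiable 𝕜 (deriv ν))
    (hνb' : Differentiable 𝕜 (deriv ν_b)) (hg : Differentiable 𝕜 g)
    (hdx : ∀ x y, deriv ξ x - deriv ν (y - h x) * deriv h x = deriv ν_b (x - g y)) (x y : 𝕜) :
    deriv (deriv ν) (y - h x) * deriv h x = deriv (deriv ν_b) (x - g y) * deriv g y := by
  have hfwd : HasDerivAt (fun s => deriv ξ x - deriv ν (s - h x) * deriv h x)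
      (-(deriv (deriv ν) (y - h x) * deriv h x)) y :=
    (((hν' _).hasDerivAt.comp_sub_const y (h x)).mul_const _).const_sub _
  have hbwd : HasDerivAt (fun s => deriv ν_b (x - g s))
      (deriv (deriv ν_b) (x - g y) * -deriv g y) y :=
    (hνb' _).hasDerivAt.comp y ((hg y).hasDerivAt.const_sub x)
  linear_combination -hfwd.eq_of_forall_eq hbwd (hdx x)

end AdditiveNoise

theorem anm_identifiability_ode_general
    (ν ξ η_b ν_b h g : ℝ → ℝ)
    (hν : ContDiff ℝ 3 ν) (hξ : ContDiff ℝ 3 ξ)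
    (hνb : ContDiff ℝ 3 ν_b)
    (hh : ContDiff ℝ 3 h) (hg : ContDiff ℝ 3 g)
    (heq : ∀ x y : ℝ, ν (y - h x) + ξ x = ν_b (x - g y) + η_b y) :
    ∀ x y : ℝ,
      deriv (deriv ν) (y - h x) * deriv h x ≠ 0 →
      deriv g y ≠ 0 →
      deriv (deriv (deriv ξ)) x =
        deriv (deriv ξ) x *
            (deriv (deriv h) x / deriv h x -
              deriv (deriv (deriv ν)) (y - h x) * deriv h x /
                deriv (deriv ν) (y - h x)) +
          deriv (deriv (deriv ν)) (y - h x) * deriv ν (y - h x) *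
              deriv (deriv h) x * deriv h x / deriv (deriv ν) (y - h x) -
          deriv ν (y - h x) * (deriv (deriv h) x) ^ 2 / deriv h x -
          2 * deriv (deriv ν) (y - h x) * deriv (deriv h) x * deriv h x +
          deriv ν (y - h x) * deriv (deriv (deriv h)) x := by
  intro x y hF _
  have hh₀ : Differentiable ℝ h := hh.differentiable (by norm_num)
  have hh₁ : Differentiable ℝ (deriv h) :=
    hh.differentiable_deriv_iterate (m := 1) (by norm_num)
  have hh₂ : Differentiable ℝ (deriv (deriv h)) :=
    hh.differentiable_deriv_iterate (m := 2) (by norm_num)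
  have hν₁ : Differentiable ℝ (deriv ν) :=
    hν.differentiable_deriv_iterate (m := 1) (by norm_num)
  have hν₂ : Differentiable ℝ (deriv (deriv ν)) :=
    hν.differentiable_deriv_iterate (m := 2) (by norm_num)
  have hξ₂ : Differentiable ℝ (deriv (deriv ξ)) :=
    hξ.differentiable_deriv_iterate (m := 2) (by norm_num)
  have hνb₁ : Differentiable ℝ (deriv ν_b) :=
    hνb.differentiable_deriv_iterate (m := 1) (by norm_num)
  have hdx := partialX_forward_eq_backward (hν.differentiable (by norm_num))
    (hξ.differentiable (by norm_num)) hh₀ (hνb.differentiable (by norm_num)) heq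
  have hdxx := partialXX_forward_eq_backward hν₁
    (hξ.differentiable_deriv_iterate (m := 1) (by norm_num)) hh₀ hh₁ hνb₁ hdx
  have hdxy := partialXY_forward_eq_backward hν₁ hνb₁ (hg.differentiable (by norm_num)) hdx
  have hF' := hasDerivAt_comp_const_sub_mul y (hν₂ _) (hh₀ x).hasDerivAt (hh₁ x).hasDerivAt
  have hG' : HasDerivAt (fun t => deriv (deriv ν) (y - h t) * deriv h t * deriv h t
      - deriv ν (y - h t) * deriv (deriv h) t + deriv (deriv ξ) t) _ x :=
    ((hF'.mul (hh₁ x).hasDerivAt).sub (hasDerivAt_comp_const_sub_mul y (hν₁ _) (hh₀ x).hasDerivAt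
      (hh₂ x).hasDerivAt)).add (hξ₂ x).hasDerivAt
  have hW := hF'.wronskian_eq_zero_of_eq_const_mul hG' (c := deriv g y) fun t => by
    linear_combination hdxy t y - deriv g y * hdxx t y
  obtain ⟨hν₂_ne, hh₁_ne⟩ := mul_ne_zero_iff.mp hF
  field_simp
  linear_combination -hW

theorem anm_identifiability_ode
    (ν ξ η_b ν_b h g : ℝ → ℝ)
    (hν : ContDiff ℝ 3 ν) (hξ : ContDiff ℝ 3 ξ)
    (hη : ContDiff ℝ 3 η_b) (hνb : ContDiff ℝ 3 ν_b)
    (hh : ContDiff ℝ 3 h) (hg : ContDiff ℝ 3 g)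
    (heq : ∀ x y : ℝ, ν (y - h x) + ξ x = ν_b (x - g y) + η_b y) :
    ∀ x y : ℝ,
      deriv (deriv ν) (y - h x) * deriv h x ≠ 0 →
      deriv g y ≠ 0 →
      deriv (deriv (deriv ξ)) x =
        deriv (deriv ξ) x *
            (deriv (deriv h) x / deriv h x -
              deriv (deriv (deriv ν)) (y - h x) * deriv h x /
                deriv (deriv ν) (y - h x)) +
          deriv (deriv (deriv ν)) (y - h x) * deriv ν (y - h x) *
              deriv (deriv h) x * deriv h x / deriv (deriv ν) (y - h x) -
          deriv ν (y - h x) * (deriv (deriv h) x) ^ 2 / deriv h x -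
          2 * deriv (deriv ν) (y - h x) * deriv (deriv h) x * deriv h x +
          deriv ν (y - h x) * deriv (deriv (deriv h)) x :=
  anm_identifiability_ode_general ν ξ η_b ν_b h g hν hξ hνb hh hg heq
end

section
/- Let ξ, ν : ℝ → ℝ be twice differentiable, h_Y : ℝ → ℝ twice differentiable, h_X : ℝ → ℝ differentiable, and suppose that for all (ỹ, n_X) ∈ ℝ², with x̃ = h_X(ỹ) + n_X and n_Y = ỹ - h_Y(x̃), the function W(ỹ, n_X) = ξ(x̃) + ν(n_Y) has vanishing mixed partial derivative ∂²W/(∂ỹ ∂n_X) = 0. Then at every point where ν''(n_Y)·h_Y'(x̃) ≠ 0: 1/h_X'(ỹ) = (ξ''(x̃) + ν''(n_Y)·(h_Y'(x̃))² - ν'(n_Y)·h_Y''(x̃)) / (ν''(n_Y)·h_Y'(x̃)). -/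
/-!
By the chain rule the mixed partial of `W` is `h_X'(ỹ) · A - B`, where `A / B` is the right-hand
side of the constraint. If it vanishes and `B ≠ 0`, then `h_X'(ỹ) ≠ 0` and `1 / h_X'(ỹ) = A / B`.
-/

section MixedPartial

variable {ξ ν hY hX : ℝ → ℝ}

theorem hasDerivAt_noiseModel_y (hξ : Differentiable ℝ ξ) (hν : Differentiable ℝ ν)
    (hhY : Differentiable ℝ hY) {y : ℝ} (hhX : DifferentiableAt ℝ hX y) (nX : ℝ) :
    HasDerivAt (fun y' => ξ (hX y' + nX) + ν (y' - hY (hX y' + nX)))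
      (deriv ξ (hX y + nX) * deriv hX y +
        deriv ν (y - hY (hX y + nX)) * (1 - deriv hY (hX y + nX) * deriv hX y)) y := by
  have hx : HasDerivAt (fun y' => hX y' + nX) (deriv hX y) y := hhX.hasDerivAt.add_const nX
  have hn : HasDerivAt (fun y' => y' - hY (hX y' + nX))
      (1 - deriv hY (hX y + nX) * deriv hX y) y :=
    (hasDerivAt_id y).sub ((hhY _).hasDerivAt.comp y hx)
  exact ((hξ _).hasDerivAt.comp y hx).add ((hν _).hasDerivAt.comp y hn)

theorem hasDerivAt_noiseModel_partial_y_nX (hξ' : Differentiable ℝ (deriv ξ))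
    (hν' : Differentiable ℝ (deriv ν)) (hhY : Differentiable ℝ hY)
    (hhY' : Differentiable ℝ (deriv hY)) (c a y nX : ℝ) :
    HasDerivAt (fun nX' => deriv ξ (c + nX') * a +
        deriv ν (y - hY (c + nX')) * (1 - deriv hY (c + nX') * a))
      (deriv (deriv ξ) (c + nX) * a +
        (deriv (deriv ν) (y - hY (c + nX)) * -deriv hY (c + nX) * (1 - deriv hY (c + nX) * a) +
          deriv ν (y - hY (c + nX)) * -(deriv (deriv hY) (c + nX) * a))) nX := by
  have hx : HasDerivAt (fun nX' => c + nX') 1 nX := (hasDerivAt_id nX).const_add c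
  have hn : HasDerivAt (fun nX' => y - hY (c + nX')) (-deriv hY (c + nX)) nX := by
    simpa using ((hhY _).hasDerivAt.comp nX hx).const_sub y
  have hξ'x := ((hξ' _).hasDerivAt.comp nX hx).mul_const a
  have hν'n := (hν' _).hasDerivAt.comp nX hn
  have hY'x := (((hhY' _).hasDerivAt.comp nX hx).mul_const a).const_sub 1
  simp only [mul_one] at hξ'x hY'x
  exact hξ'x.add (hν'n.mul hY'x)

theorem deriv_nX_deriv_y_noiseModel (hξ : ContDiff ℝ 2 ξ) (hν : ContDiff ℝ 2 ν)
    (hhY : ContDiff ℝ 2 hY) {y : ℝ} (hhX : DifferentiableAt ℝ hX y) (nX : ℝ) :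
    deriv (fun nX' => deriv (fun y' => ξ (hX y' + nX') + ν (y' - hY (hX y' + nX'))) y) nX =
      deriv hX y * (deriv (deriv ξ) (hX y + nX) +
          deriv (deriv ν) (y - hY (hX y + nX)) * deriv hY (hX y + nX) ^ 2 -
          deriv ν (y - hY (hX y + nX)) * deriv (deriv hY) (hX y + nX)) -
        deriv (deriv ν) (y - hY (hX y + nX)) * deriv hY (hX y + nX) := by
  have hYd := hhY.differentiable two_ne_zero
  have h_partial_y : (fun nX' => deriv (fun y' => ξ (hX y' + nX') + ν (y' - hY (hX y' + nX'))) y)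
      = fun nX' => deriv ξ (hX y + nX') * deriv hX y +
          deriv ν (y - hY (hX y + nX')) * (1 - deriv hY (hX y + nX') * deriv hX y) :=
    funext fun nX' => (hasDerivAt_noiseModel_y (hξ.differentiable two_ne_zero)
      (hν.differentiable two_ne_zero) hYd hhX nX').deriv
  rw [h_partial_y, (hasDerivAt_noiseModel_partial_y_nX hξ.differentiable_deriv_two
    hν.differentiable_deriv_two hYd hhY.differentiable_deriv_two _ _ y nX).deriv]
  ring

end MixedPartial

theorem one_div_eq_div_of_mul_sub_eq_zero {K : Type*} [Field K] {a A B : K}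
    (h : a * A - B = 0) (hB : B ≠ 0) : 1 / a = A / B := by
  have ha : a ≠ 0 := by
    rintro rfl
    exact hB (by simpa using h.symm)
  rw [div_eq_div_iff ha hB]
  linear_combination -h

theorem constraint_on_hX
    (ξ ν hY hX : ℝ → ℝ)
    (hξ : ContDiff ℝ 2 ξ) (hν : ContDiff ℝ 2 ν)
    (hhY : ContDiff ℝ 2 hY) (hhX : Differentiable ℝ hX)
    (hmixed : ∀ y nX : ℝ,
      deriv (fun nX' => deriv
        (fun y' => ξ (hX y' + nX') + ν (y' - hY (hX y' + nX'))) y) nX = 0) :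
    ∀ y nX : ℝ,
      deriv (deriv ν) (y - hY (hX y + nX)) * deriv hY (hX y + nX) ≠ 0 →
      1 / deriv hX y =
        (deriv (deriv ξ) (hX y + nX) +
            deriv (deriv ν) (y - hY (hX y + nX)) * (deriv hY (hX y + nX)) ^ 2 -
            deriv ν (y - hY (hX y + nX)) * deriv (deriv hY) (hX y + nX)) /
          (deriv (deriv ν) (y - hY (hX y + nX)) * deriv hY (hX y + nX)) := by
  intro y nX hB
  have h := hmixed y nX
  rw [deriv_nX_deriv_y_noiseModel hξ hν hhY (hhX y) nX] at h
  exact one_div_eq_div_of_mul_sub_eq_zero h hB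
end

section
/- Let f(x) = -x, g(y) = log(1 + exp(-y)). There is no pair of functions (a linear map ℓ(y) = αy + β with α ≠ 0 and a density q on ℝ) such that the joint density p(x, y) = exp(-(y+x) - exp(-(y+x))) · exp(-x - exp(-x)) factorizes as p(x, y) = q(x - ℓ(y)) · r(y) for some density r, i.e., the backward model of Example 2 cannot be linear. -/
open Real MeasureTheory

theorem no_backward_linear_model :
    ¬ ∃ (α β : ℝ) (q r : ℝ → ℝ),
        α ≠ 0 ∧
        (∀ u, 0 ≤ q u) ∧ (∫ u : ℝ, q u = 1) ∧
        (∀ v, 0 ≤ r v) ∧ (∫ v : ℝ, r v = 1) ∧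
        (∀ x y : ℝ,
          Real.exp (-(y + x) - Real.exp (-(y + x))) * Real.exp (-x - Real.exp (-x)) =
            q (x - (α * y + β)) * r y) := by
  rintro ⟨α, β, q, r, hα, hq0, -, hr0, -, hEq⟩
  -- Step 1: for every y, exp(-(1+α)y-β) + exp(-αy-β) = 2 exp(-β)
  have E0 : ∀ z : ℝ, Real.exp (-(z + (α*z+β)) - Real.exp (-(z + (α*z+β)))) *
      Real.exp (-(α*z+β) - Real.exp (-(α*z+β))) = q 0 * r z := by
    intro z
    have h := hEq (α*z+β) z
    rw [show (α*z+β) - (α*z+β) = (0:ℝ) by ring] at h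
    exact h
  have E1 : ∀ z : ℝ, Real.exp (-(z + (1+α*z+β)) - Real.exp (-(z + (1+α*z+β)))) *
      Real.exp (-(1+α*z+β) - Real.exp (-(1+α*z+β))) = q 1 * r z := by
    intro z
    have h := hEq (1+α*z+β) z
    rw [show (1+α*z+β) - (α*z+β) = (1:ℝ) by ring] at h
    exact h
  have key : ∀ y : ℝ,
      Real.exp (-((1+α)*y) - β) + Real.exp (-(α*y) - β) = 2 * Real.exp (-β) := by
    intro y
    have hcross : (q 1 * r y) * (q 0 * r 0) = (q 0 * r y) * (q 1 * r 0) := by ring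
    rw [← E1 y, ← E0 0, ← E0 y, ← E1 0] at hcross
    simp only [← Real.exp_add] at hcross
    have hc := Real.exp_injective hcross
    -- rewrite inner exponentials
    have f1 : Real.exp (-(y + (1+α*y+β))) = Real.exp (-((1+α)*y) - β) * Real.exp (-1) := by
      rw [← Real.exp_add]; congr 1; ring
    have f2 : Real.exp (-(1+α*y+β)) = Real.exp (-(α*y) - β) * Real.exp (-1) := by
      rw [← Real.exp_add]; congr 1; ring
    have f3 : Real.exp (-(y + (α*y+β))) = Real.exp (-((1+α)*y) - β) := by
      congr 1; ring
    have f4 : Real.exp (-(α*y+β)) = Real.exp (-(α*y) - β) := by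
      congr 1; ring
    have g1 : Real.exp (-((0:ℝ) + (1+α*0+β))) = Real.exp (-β) * Real.exp (-1) := by
      rw [← Real.exp_add]; congr 1; ring
    have g2 : Real.exp (-(1+α*(0:ℝ)+β)) = Real.exp (-β) * Real.exp (-1) := by
      rw [← Real.exp_add]; congr 1; ring
    have g3 : Real.exp (-((0:ℝ) + (α*0+β))) = Real.exp (-β) := by
      congr 1; ring
    have g4 : Real.exp (-(α*(0:ℝ)+β)) = Real.exp (-β) := by
      congr 1; ring
    rw [f1, f2, f3, f4, g1, g2, g3, g4] at hc
    have he : Real.exp (-1) ≠ 1 := by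
      intro h
      have := Real.exp_injective (h.trans Real.exp_zero.symm)
      norm_num at this
    have hfac : (Real.exp (-((1+α)*y) - β) + Real.exp (-(α*y) - β) - 2 * Real.exp (-β))
        * (1 - Real.exp (-1)) = 0 := by linarith [hc]
    have h1e : (1 : ℝ) - Real.exp (-1) ≠ 0 := fun h => he (by linarith)
    have := (mul_eq_zero.mp hfac).resolve_right h1e
    linarith
  -- Step 2: evaluate at y = 1 and y = -1
  have k1 := key 1
  have k2 := key (-1)
  have r1 : Real.exp (-((1+α)*(1:ℝ)) - β) = Real.exp (-β) * Real.exp (-1) * Real.exp (-α) := by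
    rw [← Real.exp_add, ← Real.exp_add]; congr 1; ring
  have r2 : Real.exp (-(α*(1:ℝ)) - β) = Real.exp (-β) * Real.exp (-α) := by
    rw [← Real.exp_add]; congr 1; ring
  have r3 : Real.exp (-((1+α)*(-1:ℝ)) - β) = Real.exp (-β) * Real.exp 1 * Real.exp α := by
    rw [← Real.exp_add, ← Real.exp_add]; congr 1; ring
  have r4 : Real.exp (-(α*(-1:ℝ)) - β) = Real.exp (-β) * Real.exp α := by
    rw [← Real.exp_add]; congr 1; ring
  rw [r1, r2] at k1
  rw [r3, r4] at k2
  set B := Real.exp (-β) with hB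
  set e := Real.exp 1 with hee
  set e1 := Real.exp (-1) with he1
  set A := Real.exp α with hA
  set Ai := Real.exp (-α) with hAi
  have hBpos : 0 < B := Real.exp_pos _
  have hApos : 0 < A := Real.exp_pos _
  have hAipos : 0 < Ai := Real.exp_pos _
  have hme : e1 * e = 1 := by rw [he1, hee, ← Real.exp_add]; norm_num
  have hmA : Ai * A = 1 := by rw [hAi, hA, ← Real.exp_add]; norm_num
  have hegt : 1 < e := by rw [hee]; linarith [Real.exp_one_gt_d9]
  -- cancel B
  have k1' : e1 * Ai + Ai = 2 := by
    have : B * (e1 * Ai + Ai - 2) = 0 := by linear_combination k1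
    have := (mul_eq_zero.mp this).resolve_left (ne_of_gt hBpos)
    linarith
  have k2' : e * A + A = 2 := by
    have : B * (e * A + A - 2) = 0 := by linear_combination k2
    have := (mul_eq_zero.mp this).resolve_left (ne_of_gt hBpos)
    linarith
  -- multiply: (e1+1)(e+1) = 4, hence e1 + e = 2, contradiction with e*e1=1, e>1
  have hsum : e1 + e = 2 := by nlinarith [k1', k2', hme, hmA]
  nlinarith [mul_pos (sub_pos.mpr hegt) (sub_pos.mpr hegt), hme, hsum]
end
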